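/- arXiv:1209.1826 — 3 statements merged into one kernel-verified Lean document; each statement's English description precedes it below -/
import Mathlib

section
/- Let U be an integrable real-valued random variable taking values in L with g(U, τ(V)) integrable. Then almost everywhere, E[ g(U, τ(V)) ∥ σ(V) ] ≥ g( E[U ∥ σ(V)], τ(V) ), where E[· ∥ σ(V)] denotes conditional expectation given the σ-field generated by V. -/
/-!
Conditioning on `V` is integration against the regular conditional distribution
`κ = condDistrib U V P`: both conditional expectations are a.e. integrals against `κ (V ω)`, and
`κ (V ω)` is a.e. concentrated on `L`. Since `τ (V ω)` is frozen under `κ (V ω)`, the inequality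
reduces to the unconditional Jensen inequality for the convex function `g · (τ (V ω))` on the
interval `L`. That one needs neither closedness of `L` nor continuity: at a mean in the interior
of `L` integrate a supporting line, and a mean on the boundary forces the variable to be a.s.
constant.
-/

open MeasureTheory ProbabilityTheory Set Filter

theorem ConvexOn.exists_forall_add_mul_sub_le_of_mem_interior {s : Set ℝ} {f : ℝ → ℝ} {x : ℝ}
    (hf : ConvexOn ℝ s f) (hx : x ∈ interior s) : ∃ c, ∀ y ∈ s, f x + c * (y - x) ≤ f y := by
  refine ⟨derivWithin f (Ioi x) x, fun y hy => ?_⟩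
  rcases lt_trichotomy y x with hyx | rfl | hxy
  · have h := (hf.slope_le_leftDeriv_of_mem_interior hy hx hyx).trans
      (hf.leftDeriv_le_rightDeriv_of_mem_interior hx)
    rw [slope_def_field, div_le_iff₀ (sub_pos.2 hyx)] at h
    linarith
  · simp
  · have h := hf.rightDeriv_le_slope_of_mem_interior hx hy hxy
    rw [slope_def_field, le_div_iff₀ (sub_pos.2 hxy)] at h
    linarith

section Integral

variable {α : Type*} [MeasurableSpace α] {μ : Measure α} [IsProbabilityMeasure μ] {s : Set ℝ}
  {f : α → ℝ}

theorem ae_eq_integral_of_integral_notMem_interior (hs : s.OrdConnected)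
    (hfs : ∀ᵐ a ∂μ, f a ∈ s) (hfi : Integrable f μ) (hm : ∫ a, f a ∂μ ∉ interior s) :
    f =ᵐ[μ] fun _ => ∫ a, f a ∂μ := by
  set m := ∫ a, f a ∂μ
  have hm_const : ∫ _, m ∂μ = m := by simp
  have h_side : (∀ y ∈ s, y ≤ m) ∨ ∀ y ∈ s, m ≤ y := by
    by_contra! ⟨⟨b, hb, hmb⟩, a, ha, ham⟩
    exact hm (interior_mono (hs.out ha hb) (by rw [interior_Icc]; exact ⟨ham, hmb⟩))
  rcases h_side with h_le | h_ge
  · exact (integral_eq_iff_of_ae_le hfi (integrable_const m)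
      (hfs.mono fun a ha => h_le _ ha)).1 hm_const.symm
  · exact ((integral_eq_iff_of_ae_le (integrable_const m) hfi
      (hfs.mono fun a ha => h_ge _ ha)).1 hm_const).symm

theorem ConvexOn.map_integral_le_real {g : ℝ → ℝ} (hg : ConvexOn ℝ s g)
    (hfs : ∀ᵐ a ∂μ, f a ∈ s) (hfi : Integrable f μ) (hgi : Integrable (fun a => g (f a)) μ) :
    g (∫ a, f a ∂μ) ≤ ∫ a, g (f a) ∂μ := by
  set m := ∫ a, f a ∂μ
  by_cases hm : m ∈ interior s
  · obtain ⟨c, hc⟩ := hg.exists_forall_add_mul_sub_le_of_mem_interior hm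
    have h_lin : Integrable (fun a => c * (f a - m)) μ :=
      (hfi.sub (integrable_const m)).const_mul c
    calc g m = ∫ a, (g m + c * (f a - m)) ∂μ := by
          rw [integral_add (integrable_const _) h_lin, integral_const_mul,
            integral_sub hfi (integrable_const m)]
          simp [m]
      _ ≤ ∫ a, g (f a) ∂μ :=
          integral_mono_ae ((integrable_const _).add h_lin) hgi (hfs.mono fun a ha => hc _ ha)
  · have h_const := ae_eq_integral_of_integral_notMem_interior hg.1.ordConnected hfs hfi hm
    refine le_of_eq ?_
    calc g m = ∫ _, g m ∂μ := by simp
      _ = ∫ a, g (f a) ∂μ := integral_congr_ae (h_const.mono fun a ha => congrArg g ha.symm)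

end Integral

theorem ContinuousOn.aestronglyMeasurable_comp {α γ δ : Type*} [MeasurableSpace α]
    [TopologicalSpace γ] [MeasurableSpace γ] [OpensMeasurableSpace γ] [TopologicalSpace δ]
    [SecondCountableTopologyEither γ δ] [TopologicalSpace.PseudoMetrizableSpace δ]
    {μ : Measure α} {G : γ → δ} {t : Set γ} {ψ : α → γ}
    (hG : ContinuousOn G t) (ht : MeasurableSet t) (hψ : Measurable ψ)
    (hψt : ∀ᵐ a ∂μ, ψ a ∈ t) : AEStronglyMeasurable (G ∘ ψ) μ := by
  have h_ae : ∀ᵐ x ∂μ.map ψ, x ∈ t := (ae_map_iff hψ.aemeasurable ht).2 hψt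
  refine AEStronglyMeasurable.comp_measurable ?_ hψ
  rw [← Measure.restrict_eq_self_of_ae_mem h_ae]
  exact hG.aestronglyMeasurable ht

namespace ProbabilityTheory

variable {Ω β γ : Type*} [MeasurableSpace Ω] {mβ : MeasurableSpace β} [MeasurableSpace γ]
  [StandardBorelSpace γ] [Nonempty γ] {μ : Measure Ω} [IsFiniteMeasure μ]

theorem ae_ae_condDistrib_mem {X : Ω → β} {Y : Ω → γ} {s : Set γ} (hX : AEMeasurable X μ)
    (hY : AEMeasurable Y μ) (hs : MeasurableSet s) (hYs : ∀ᵐ ω ∂μ, Y ω ∈ s) :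
    ∀ᵐ ω ∂μ, ∀ᵐ y ∂condDistrib Y X μ (X ω), y ∈ s :=
  ae_of_ae_map hX <| Measure.ae_ae_of_ae_comp <| by
    rw [condDistrib_comp_map hX hY]
    exact (ae_map_iff hY hs).2 hYs

theorem map_condExp_comap_le_of_convexOn {X : Ω → β} {Y : Ω → ℝ} {φ : β → ℝ → ℝ} {s : Set ℝ}
    (hX : Measurable X) (hs : MeasurableSet s) (hφ : ∀ b, ConvexOn ℝ s (φ b))
    (hφm : AEStronglyMeasurable (Function.uncurry φ) (μ.map fun ω => (X ω, Y ω)))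
    (hYs : ∀ᵐ ω ∂μ, Y ω ∈ s) (hY : Integrable Y μ)
    (hφY : Integrable (fun ω => φ (X ω) (Y ω)) μ) :
    ∀ᵐ ω ∂μ, φ (X ω) (μ[Y | mβ.comap X] ω) ≤ μ[fun ω => φ (X ω) (Y ω) | mβ.comap X] ω := by
  have hY_meas := hY.aemeasurable
  have hXY := hX.aemeasurable.prodMk hY_meas
  have hφ_int : Integrable (Function.uncurry φ) (μ.map fun ω => (X ω, Y ω)) :=
    (integrable_map_measure hφm hXY).2 hφY
  have hid_int : Integrable (fun p : β × ℝ => p.2) (μ.map fun ω => (X ω, Y ω)) :=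
    (integrable_map_measure measurable_snd.aestronglyMeasurable hXY).2 hY
  filter_upwards [condExp_ae_eq_integral_condDistrib' hX hY,
    condExp_prod_ae_eq_integral_condDistrib' hX hY_meas hφ_int,
    ae_ae_condDistrib_mem hX.aemeasurable hY_meas hs hYs,
    hid_int.condDistrib_ae hX.aemeasurable hY_meas,
    hφ_int.condDistrib_ae hX.aemeasurable hY_meas] with ω hY_eq hφY_eq h_mem h_int h_φint
  simp only [Function.uncurry_apply_pair] at hφY_eq h_φint
  rw [hY_eq, hφY_eq]
  exact (hφ (X ω)).map_integral_le_real h_mem h_int h_φint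

end ProbabilityTheory

/-- **conditional Jensen inequality.** Let `L ⊆ ℝ` be an interval,
`g : L × L → ℝ` continuous and convex in its first argument for every fixed second argument in
`L`, `V` a random variable, and `τ` a measurable `L`-valued function on the range of `V`.
If `U` is an integrable `L`-valued random variable with `g(U, τ(V))` integrable, then a.e.
`E[g(U, τ(V)) ∥ σ(V)] ≥ g(E[U ∥ σ(V)], τ(V))`. -/
theorem conditional_jensen
    {Ω : Type*} [MeasurableSpace Ω] (P : Measure Ω) [IsProbabilityMeasure P]
    {β : Type*} [mβ : MeasurableSpace β]
    (L : Set ℝ) (hL : L.OrdConnected)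
    (g : ℝ → ℝ → ℝ)
    (hgcont : ContinuousOn (fun p : ℝ × ℝ => g p.1 p.2) (L ×ˢ L))
    (hgconv : ∀ t ∈ L, ConvexOn ℝ L (fun x => g x t))
    (V : Ω → β) (hV : Measurable V)
    (τ : β → ℝ) (hτ : Measurable τ) (hτL : ∀ b, τ b ∈ L)
    (U : Ω → ℝ) (hUint : Integrable U P) (hUL : ∀ ω, U ω ∈ L)
    (hgint : Integrable (fun ω => g (U ω) (τ (V ω))) P) :
    ∀ᵐ ω ∂P,
      g ((P[U | MeasurableSpace.comap V mβ]) ω) (τ (V ω))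
        ≤ (P[(fun ω' => g (U ω') (τ (V ω'))) | MeasurableSpace.comap V mβ]) ω := by
  have hLL_meas : MeasurableSet (L ×ˢ L) := hL.measurableSet.prod hL.measurableSet
  have hψ : Measurable fun p : β × ℝ => (p.2, τ p.1) :=
    measurable_snd.prodMk (hτ.comp measurable_fst)
  have hψL : ∀ᵐ p ∂P.map (fun ω => (V ω, U ω)), (p.2, τ p.1) ∈ L ×ˢ L :=
    (ae_map_iff (hV.aemeasurable.prodMk hUint.aemeasurable) (hψ hLL_meas)).2
      (ae_of_all _ fun ω => ⟨hUL ω, hτL _⟩)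
  exact map_condExp_comap_le_of_convexOn hV hL.measurableSet (fun b => hgconv _ (hτL b))
    (hgcont.aestronglyMeasurable_comp hLL_meas hψ hψL) (ae_of_all _ hUL) hUint hgint
end

section
/- Let U be a square-integrable real-valued random variable taking values in L with g(U, τ(V)) integrable, and suppose x ↦ g(x,t) is strictly convex for every t ∈ L. If E[ g(U, τ(V)) ∥ σ(V) ] = g( E[U ∥ σ(V)], τ(V) ) almost everywhere, then U = E[U ∥ σ(V)] almost everywhere; in particular U is almost surely a measurable function of V. -/
/-!
Disintegrate along `V`: with `κ := condDistrib U V P`, for a.e. `ω` both conditional expectations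
in the hypothesis are integrals against the probability measure `κ (V ω)`, so the hypothesis is,
fibrewise, the equality case of the unconditional Jensen inequality for the strictly convex
function `g (·, τ (V ω))`. This forces `κ (V ω)` to be the Dirac mass at its mean, which is
`E[U ∥ σ(V)]`. The unconditional equality case comes from integrating the strict supporting line
at the mean `m`, whose slope is the right derivative at `m`; it exists because `m` is interior to
`L` unless `U` lies a.e. on one side of `m`, and then `U = m` a.e. anyway.
-/

open MeasureTheory ProbabilityTheory Set Filter TopologicalSpace

lemma Set.OrdConnected.mem_interior_of_lt_of_lt {S : Set ℝ} (hS : S.OrdConnected) {a b x : ℝ}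
    (ha : a ∈ S) (hb : b ∈ S) (hax : a < x) (hxb : x < b) : x ∈ interior S :=
  mem_interior_iff_mem_nhds.2 <|
    mem_of_superset (Ioo_mem_nhds hax hxb) (Ioo_subset_Icc_self.trans (hS.out ha hb))

theorem ContinuousOn.aestronglyMeasurable_comp_s4 {δ E F : Type*} [MeasurableSpace δ]
    [TopologicalSpace E] [MeasurableSpace E] [OpensMeasurableSpace E]
    [TopologicalSpace F] [SecondCountableTopologyEither E F] [PseudoMetrizableSpace F]
    {f : E → F} {s : Set E} (hf : ContinuousOn f s) (hs : MeasurableSet s) {ν : Measure δ} {x : δ → E}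
    (hx : AEMeasurable x ν) (hxs : ∀ᵐ d ∂ν, x d ∈ s) :
    AEStronglyMeasurable (fun d => f (x d)) ν := by
  have hf' := hf.aestronglyMeasurable hs (μ := ν.map x)
  rw [Measure.restrict_eq_self_of_ae_mem ((ae_map_iff hx hs).2 hxs)] at hf'
  exact hf'.comp_aemeasurable hx

namespace StrictConvexOn

variable {S : Set ℝ} {φ : ℝ → ℝ}

lemma add_rightDeriv_mul_sub_lt (hφ : StrictConvexOn ℝ S φ) {x y : ℝ} (hx : x ∈ interior S)
    (hy : y ∈ S) (hyx : y ≠ x) : φ x + derivWithin φ (Ioi x) x * (y - x) < φ y := by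
  rcases hyx.lt_or_gt with hyx | hxy
  · have h := (hφ.slope_lt_leftDeriv hy (interior_subset hx) hyx
      (hφ.convexOn.differentiableWithinAt_Iio_of_mem_interior hx)).trans_le
      (hφ.convexOn.leftDeriv_le_rightDeriv_of_mem_interior hx)
    rw [slope_def_field, div_lt_iff₀ (sub_pos.2 hyx)] at h
    linarith
  · have h := hφ.rightDeriv_lt_slope (interior_subset hx) hy hxy
      (hφ.convexOn.differentiableWithinAt_Ioi_of_mem_interior hx)
    rw [slope_def_field, lt_div_iff₀ (sub_pos.2 hxy)] at h
    linarith

theorem ae_eq_integral_of_integral_map_le {α : Type*} [MeasurableSpace α] {μ : Measure α}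
    [IsProbabilityMeasure μ] {f : α → ℝ} (hφ : StrictConvexOn ℝ S φ) (hfS : ∀ᵐ a ∂μ, f a ∈ S)
    (hf : Integrable f μ) (hφf : Integrable (fun a => φ (f a)) μ)
    (h : ∫ a, φ (f a) ∂μ ≤ φ (∫ a, f a ∂μ)) :
    f =ᵐ[μ] fun _ => ∫ a, f a ∂μ := by
  set m := ∫ a, f a ∂μ
  have hm : ∫ _, m ∂μ = m := by simp
  by_cases hle : ∀ᵐ a ∂μ, f a ≤ m
  · exact (integral_eq_iff_of_ae_le hf (integrable_const m) hle).1 hm.symm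
  by_cases hge : ∀ᵐ a ∂μ, m ≤ f a
  · exact ((integral_eq_iff_of_ae_le (integrable_const m) hf hge).1 hm).symm
  obtain ⟨a, hma, ha⟩ := ((not_eventually.1 hle).and_eventually hfS).exists
  obtain ⟨b, hbm, hb⟩ := ((not_eventually.1 hge).and_eventually hfS).exists
  have hm_int : m ∈ interior S :=
    hφ.1.ordConnected.mem_interior_of_lt_of_lt hb ha (not_le.1 hbm) (not_le.1 hma)
  set c := derivWithin φ (Ioi m) m
  have hsupport : ∀ y ∈ S, φ m + c * (y - m) ≤ φ y := fun y hy => by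
    rcases eq_or_ne y m with rfl | hym
    · simp
    · exact (hφ.add_rightDeriv_mul_sub_lt hm_int hy hym).le
  have hslope_int : Integrable (fun a => c * (f a - m)) μ :=
    (hf.sub (integrable_const m)).const_mul c
  have hline_int : Integrable (fun a => φ m + c * (f a - m)) μ :=
    (integrable_const _).add hslope_int
  have hline : ∫ a, φ m + c * (f a - m) ∂μ = φ m := by
    rw [integral_add (integrable_const _) hslope_int, integral_const_mul,
      integral_sub hf (integrable_const m)]
    simp [m]
  have hφf_le : ∀ᵐ a ∂μ, φ m + c * (f a - m) ≤ φ (f a) := hfS.mono fun a ha => hsupport _ ha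
  have heq : (fun a => φ m + c * (f a - m)) =ᵐ[μ] fun a => φ (f a) :=
    (integral_eq_iff_of_ae_le hline_int hφf hφf_le).1 <|
      le_antisymm (integral_mono_ae hline_int hφf hφf_le) (h.trans_eq hline.symm)
  filter_upwards [heq, hfS] with a ha hfa
  by_contra hne
  exact (hφ.add_rightDeriv_mul_sub_lt hm_int hfa hne).ne ha

end StrictConvexOn

namespace ProbabilityTheory

variable {α β γ : Type*} {mα : MeasurableSpace α} [mβ : MeasurableSpace β] [MeasurableSpace γ]
  [StandardBorelSpace γ] [Nonempty γ] {μ : Measure α} [IsFiniteMeasure μ] {X : α → β} {Y : α → γ}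

lemma measurableSet_ae_condDistrib {p : β → γ → Prop}
    (hp : MeasurableSet {q : β × γ | p q.1 q.2}) :
    MeasurableSet {b | ∀ᵐ y ∂condDistrib Y X μ b, p b y} := by
  simp_rw [ae_iff]
  exact Kernel.measurable_kernel_prodMk_left hp.compl (measurableSet_singleton 0)

lemma ae_ae_condDistrib_iff (hX : Measurable X) (hY : AEMeasurable Y μ) {p : β → γ → Prop}
    (hp : MeasurableSet {q : β × γ | p q.1 q.2}) :
    (∀ᵐ a ∂μ, ∀ᵐ y ∂condDistrib Y X μ (X a), p (X a) y) ↔ ∀ᵐ a ∂μ, p (X a) (Y a) := by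
  rw [← ae_map_iff hX.aemeasurable (measurableSet_ae_condDistrib hp),
    ← Measure.ae_compProd_iff hp, compProd_map_condDistrib hY,
    ae_map_iff (hX.aemeasurable.prodMk hY) hp]

theorem ae_eq_condExp_of_condExp_map_le {U : α → ℝ} (hX : Measurable X) (hU : Integrable U μ)
    {S : Set ℝ} (hS : MeasurableSet S) (hUS : ∀ᵐ a ∂μ, U a ∈ S) {φ : β → ℝ → ℝ}
    (hφ : ∀ b, StrictConvexOn ℝ S (φ b))
    (hφm : AEStronglyMeasurable (fun q : β × ℝ => φ q.1 q.2) (μ.map fun a => (X a, U a)))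
    (hφU : Integrable (fun a => φ (X a) (U a)) μ)
    (h : ∀ᵐ a ∂μ, μ[fun a' => φ (X a') (U a') | mβ.comap X] a ≤ φ (X a) (μ[U | mβ.comap X] a)) :
    U =ᵐ[μ] μ[U | mβ.comap X] := by
  have hXU : AEMeasurable (fun a => (X a, U a)) μ := hX.aemeasurable.prodMk hU.aemeasurable
  set κ := condDistrib U X μ
  have hκS : ∀ᵐ a ∂μ, ∀ᵐ y ∂κ (X a), y ∈ S :=
    (ae_ae_condDistrib_iff hX hU.aemeasurable (p := fun _ y => y ∈ S)
      (measurable_snd hS)).2 hUS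
  have hκU : ∀ᵐ a ∂μ, Integrable (fun y => y) (κ (X a)) :=
    Integrable.condDistrib_ae (f := Prod.snd) hX.aemeasurable hU.aemeasurable
      ((integrable_map_measure measurable_snd.aestronglyMeasurable hXU).2 hU)
  have hκφ : ∀ᵐ a ∂μ, Integrable (φ (X a)) (κ (X a)) :=
    Integrable.condDistrib_ae hX.aemeasurable hU.aemeasurable
      ((integrable_map_measure hφm hXU).2 hφU)
  have hκ_dirac : ∀ᵐ a ∂μ, ∀ᵐ y ∂κ (X a), y = ∫ z, z ∂κ (X a) := by
    filter_upwards [h, condExp_ae_eq_integral_condDistrib' hX hU,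
      condExp_prod_ae_eq_integral_condDistrib₀ hX hU.aemeasurable hφm hφU,
      hκS, hκU, hκφ] with a ha hUa hφa hSa hUa' hφa'
    rw [hUa, hφa] at ha
    exact (hφ (X a)).ae_eq_integral_of_integral_map_le hSa hUa' hφa' ha
  have hmean : Measurable fun b => ∫ z, z ∂κ b :=
    (measurable_snd.stronglyMeasurable.integral_kernel_prod_right' (κ := κ)).measurable
  filter_upwards [(ae_ae_condDistrib_iff hX hU.aemeasurable (p := fun b y => y = ∫ z, z ∂κ b)
    (measurableSet_eq_fun measurable_snd (hmean.comp measurable_fst))).1 hκ_dirac,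
    condExp_ae_eq_integral_condDistrib' hX hU] with a h1 h2
  rw [h1, h2]

end ProbabilityTheory

/-- **equality case of conditional Jensen for strictly convex `g`.** If `U` is
square-integrable, `L`-valued, `g(U, τ(V))` is integrable, `g(·,t)` is strictly convex for each
`t ∈ L`, and `E[g(U, τ(V)) ∥ σ(V)] = g(E[U ∥ σ(V)], τ(V))` a.e., then `U = E[U ∥ σ(V)]` a.e.;
in particular `U` is almost surely a (measurable) function of `V`. -/
theorem conditional_jensen_strict_equality
    {Ω : Type*} [MeasurableSpace Ω] (P : Measure Ω) [IsProbabilityMeasure P]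
    {β : Type*} [mβ : MeasurableSpace β]
    (L : Set ℝ) (hL : L.OrdConnected)
    (g : ℝ → ℝ → ℝ)
    (hgcont : ContinuousOn (fun p : ℝ × ℝ => g p.1 p.2) (L ×ˢ L))
    (hgconv : ∀ t ∈ L, StrictConvexOn ℝ L (fun x => g x t))
    (V : Ω → β) (hV : Measurable V)
    (τ : β → ℝ) (hτ : Measurable τ) (hτL : ∀ b, τ b ∈ L)
    (U : Ω → ℝ) (hUsq : MemLp U 2 P) (hUL : ∀ ω, U ω ∈ L)
    (hgint : Integrable (fun ω => g (U ω) (τ (V ω))) P)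
    (heq : ∀ᵐ ω ∂P,
      (P[(fun ω' => g (U ω') (τ (V ω'))) | MeasurableSpace.comap V mβ]) ω
        = g ((P[U | MeasurableSpace.comap V mβ]) ω) (τ (V ω))) :
    ∀ᵐ ω ∂P, U ω = (P[U | MeasurableSpace.comap V mβ]) ω := by
  have hLL : MeasurableSet (L ×ˢ L) := hL.measurableSet.prod hL.measurableSet
  have hU : Integrable U P := hUsq.integrable one_le_two
  have hswap : Measurable fun q : β × ℝ => (q.2, τ q.1) := by fun_prop
  have hgm : AEStronglyMeasurable (fun q : β × ℝ => g q.2 (τ q.1))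
      (P.map fun ω => (V ω, U ω)) :=
    hgcont.aestronglyMeasurable_comp_s4 hLL hswap.aemeasurable <|
      (ae_map_iff (hV.aemeasurable.prodMk hU.aemeasurable) (hswap hLL)).2 <|
        ae_of_all _ fun ω => ⟨hUL ω, hτL (V ω)⟩
  exact ae_eq_condExp_of_condExp_map_le (φ := fun b x => g x (τ b)) hV hU hL.measurableSet
    (ae_of_all _ hUL) (fun b => hgconv _ (hτL b)) hgm hgint (heq.mono fun _ h => h.le)
end

section
/- Define u* : ℤ × ℤ → ℂ by u*_{k,l} = û_{k,l} / (1 + λ·(k² + l²)²). Then the minimum value of the penalized objective satisfies Q(u*) = ∑_{(k,l)∈ℤ²} λ·(k² + l²)²·|û_{k,l}|² / (1 + λ·(k² + l²)²). -/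
open scoped BigOperators

/-- The thin-plate-spline weight `(k² + l²)²` attached to the Fourier index `(k, l)`. -/
def tpsWeight (p : ℤ × ℤ) : ℝ := ((p.1 : ℝ) ^ 2 + (p.2 : ℝ) ^ 2) ^ 2

/-- The penalized objective
`Q(u) = ∑ |û_{k,l} − u_{k,l}|² + λ·∑ (k² + l²)²·|u_{k,l}|²`. -/
noncomputable def tpsQ (lam : ℝ) (uhat u : ℤ × ℤ → ℂ) : ℝ :=
  (∑' p : ℤ × ℤ, ‖uhat p - u p‖ ^ 2) + lam * ∑' p : ℤ × ℤ, tpsWeight p * ‖u p‖ ^ 2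

/-- The candidate minimizer `u*_{k,l} = û_{k,l} / (1 + λ·(k² + l²)²)`. -/
noncomputable def tpsMin (lam : ℝ) (uhat : ℤ × ℤ → ℂ) : ℤ × ℤ → ℂ :=
  fun p => uhat p / ((1 + lam * tpsWeight p : ℝ) : ℂ)

/-- The minimum value of the penalized objective satisfies
`Q(u*) = ∑_{(k,l)} λ·(k² + l²)²·|û_{k,l}|² / (1 + λ·(k² + l²)²)`. -/
theorem tps_minimum_value (lam : ℝ) (hlam : 0 < lam) (uhat : ℤ × ℤ → ℂ)
    (hsq : Summable fun p : ℤ × ℤ => ‖uhat p‖ ^ 2) :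
    tpsQ lam uhat (tpsMin lam uhat)
      = ∑' p : ℤ × ℤ, lam * tpsWeight p * ‖uhat p‖ ^ 2 / (1 + lam * tpsWeight p) := by
  have hwnn : ∀ p, 0 ≤ tpsWeight p := fun p => sq_nonneg _
  have hcnn : ∀ p, 0 ≤ lam * tpsWeight p := fun p => mul_nonneg hlam.le (hwnn p)
  have hpos : ∀ p, 0 < 1 + lam * tpsWeight p := fun p => by linarith [hcnn p]
  have hne : ∀ p, ((1 + lam * tpsWeight p : ℝ) : ℂ) ≠ 0 := fun p => by
    exact_mod_cast (hpos p).ne'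
  -- pointwise formula for the data-fidelity term
  have h1 : ∀ p, ‖uhat p - tpsMin lam uhat p‖ ^ 2
      = (lam * tpsWeight p / (1 + lam * tpsWeight p)) ^ 2 * ‖uhat p‖ ^ 2 := by
    intro p
    have heq : uhat p - tpsMin lam uhat p
        = ((lam * tpsWeight p / (1 + lam * tpsWeight p) : ℝ) : ℂ) * uhat p := by
      have hne' : (1 : ℂ) + (lam : ℂ) * ((tpsWeight p : ℝ) : ℂ) ≠ 0 := by
        have h := hne p; push_cast at h; exact h
      simp only [tpsMin]
      push_cast
      field_simp
      ring
    rw [heq, norm_mul, mul_pow, Complex.norm_real, Real.norm_eq_abs, sq_abs]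
  -- pointwise formula for the penalty term
  have h2 : ∀ p, tpsWeight p * ‖tpsMin lam uhat p‖ ^ 2
      = tpsWeight p / (1 + lam * tpsWeight p) ^ 2 * ‖uhat p‖ ^ 2 := by
    intro p
    have hp := hpos p
    simp only [tpsMin, norm_div, Complex.norm_real, Real.norm_eq_abs, abs_of_pos hp, div_pow]
    ring
  -- summability of both series
  have hS1 : Summable fun p => ‖uhat p - tpsMin lam uhat p‖ ^ 2 := by
    apply Summable.of_nonneg_of_le (fun p => by positivity) _ hsq
    intro p
    rw [h1 p]
    have hle : (lam * tpsWeight p / (1 + lam * tpsWeight p)) ^ 2 ≤ 1 := by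
      have : lam * tpsWeight p / (1 + lam * tpsWeight p) ≤ 1 := by
        rw [div_le_one (hpos p)]; linarith
      nlinarith [div_nonneg (hcnn p) (hpos p).le]
    nlinarith [sq_nonneg ‖uhat p‖, hle]
  have hS2 : Summable fun p => tpsWeight p * ‖tpsMin lam uhat p‖ ^ 2 := by
    apply Summable.of_nonneg_of_le
      (fun p => mul_nonneg (hwnn p) (sq_nonneg _)) _ (hsq.mul_left (1 / lam))
    intro p
    rw [h2 p, div_mul_eq_mul_div, one_div, inv_mul_eq_div, div_le_div_iff₀ (pow_pos (hpos p) 2) hlam]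
    have h := sq_nonneg ‖uhat p‖
    have hc := hcnn p
    have hw := hwnn p
    nlinarith [sq_nonneg (lam * tpsWeight p)]
  -- combine
  unfold tpsQ
  rw [← tsum_mul_left, ← Summable.tsum_add hS1 (hS2.mul_left lam)]
  apply tsum_congr
  intro p
  rw [h1 p, h2 p]
  have hp := hpos p
  field_simp
  ring
end
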